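/- Kinkelin's G-function satisfies the functional equation G̃(x+1) = G̃(x) · x^x for all x > 0, and G̃(0) = G̃(1) = 1. -/

import Mathlib

/-!
Everything reduces to Raabe's formula
`∫ t in x..x + 1, log Γ t = x log x - x + log (2π) / 2`.
Since `log Γ (t + 1) - log Γ t = log t`, shifting the interval of integration from `[0, 1]` to
`[x, x + 1]` adds `∫ t in 0..x, log t = x log x - x`. The value at `x = 0` comes from the
reflection formula `Γ t Γ (1 - t) = π / sin (π t)` and `∫ t in 0..π, log (sin t) = -π log 2`.
-/

open Real

/-- Kinkelin's G-function:
`G̃(x) = exp(∫₀^x log Γ(t) dt + x(x-1)/2 - (x/2) log(2π))`. -/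
noncomputable def kinkelinG (x : ℝ) : ℝ :=
  Real.exp ((∫ t in (0:ℝ)..x, Real.log (Real.Gamma t)) + x * (x - 1) / 2 -
    x / 2 * Real.log (2 * π))

open MeasureTheory Set intervalIntegral

namespace Real

theorem log_Gamma_add_one {t : ℝ} (ht : 0 < t) :
    log (Gamma (t + 1)) = log (Gamma t) + log t := by
  rw [Gamma_add_one ht.ne', log_mul ht.ne' (Gamma_pos_of_pos ht).ne', add_comm]

theorem continuousAt_log_Gamma {t : ℝ} (ht : 0 < t) :
    ContinuousAt (fun s => log (Gamma s)) t := by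
  have hpole : ∀ m : ℕ, t ≠ -m := fun m => (neg_nonpos.2 m.cast_nonneg).trans_lt ht |>.ne'
  exact (differentiableAt_Gamma hpole).continuousAt.log (Gamma_pos_of_pos ht).ne'

theorem intervalIntegrable_log_Gamma {a b : ℝ} (ha : 0 ≤ a) (hb : 0 ≤ b) :
    IntervalIntegrable (fun t => log (Gamma t)) volume a b := by
  have hcont : ContinuousOn (fun t => log (Gamma (t + 1))) (uIcc a b) := fun t ht =>
    ((continuousAt_log_Gamma (by linarith [le_inf ha hb, ht.1] : (0:ℝ) < t + 1)).comp
      (f := fun s => s + 1) (by fun_prop)).continuousWithinAt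
  refine (hcont.intervalIntegrable.sub intervalIntegrable_log').congr fun t ht => ?_
  simp [log_Gamma_add_one ((le_inf ha hb).trans_lt ht.1)]

theorem log_Gamma_add_log_Gamma_one_sub {t : ℝ} (h0 : 0 < t) (h1 : t < 1) :
    log (Gamma t) + log (Gamma (1 - t)) = log π - log (sin (π * t)) := by
  have hsin : 0 < sin (π * t) := sin_pos_of_pos_of_lt_pi (by positivity) (by nlinarith [pi_pos])
  rw [← log_mul (Gamma_pos_of_pos h0).ne' (Gamma_pos_of_pos (sub_pos.2 h1)).ne',
    Gamma_mul_Gamma_one_sub, log_div pi_ne_zero hsin.ne']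

theorem integral_log_sin_pi_mul_zero_one : ∫ t in 0..1, log (sin (π * t)) = -log 2 := by
  rw [integral_comp_mul_left (fun t => log (sin t)) pi_ne_zero, mul_zero, mul_one,
    integral_log_sin_zero_pi, smul_eq_mul]
  field_simp

theorem integral_log_Gamma_zero_one : ∫ t in 0..1, log (Gamma t) = log (2 * π) / 2 := by
  have hL := intervalIntegrable_log_Gamma le_rfl zero_le_one
  have hL' : IntervalIntegrable (fun t => log (Gamma (1 - t))) volume 0 1 := by
    simpa using (hL.comp_sub_left 1).symm
  have hsin : IntervalIntegrable (fun t => log (sin (π * t))) volume 0 1 := by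
    simpa [pi_ne_zero] using intervalIntegrable_log_sin.comp_mul_left (a := 0) (b := π) (c := π)
  have hsymm : ∫ t in 0..1, log (Gamma (1 - t)) = ∫ t in 0..1, log (Gamma t) := by
    simp [integral_comp_sub_left (fun t => log (Gamma t))]
  have hrefl : 2 * ∫ t in 0..1, log (Gamma t) = log π + log 2 :=
    calc 2 * ∫ t in 0..1, log (Gamma t)
        = ∫ t in 0..1, (log (Gamma t) + log (Gamma (1 - t))) := by
          rw [integral_add hL hL', hsymm, two_mul]
      _ = ∫ t in 0..1, (log π - log (sin (π * t))) :=
          integral_congr_Ioo_of_le zero_le_one fun t ht => log_Gamma_add_log_Gamma_one_sub ht.1 ht.2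
      _ = log π + log 2 := by
          rw [integral_sub intervalIntegrable_const hsin, integral_log_sin_pi_mul_zero_one,
            intervalIntegral.integral_const]
          simp
  rw [log_mul two_ne_zero pi_ne_zero]
  linarith

theorem integral_log_Gamma_raabe {x : ℝ} (hx : 0 ≤ x) :
    ∫ t in x..x + 1, log (Gamma t) = x * log x - x + log (2 * π) / 2 := by
  have hshift : ∫ t in 1..x + 1, log (Gamma t) =
      (∫ t in 0..x, log (Gamma t)) + (x * log x - x) :=
    calc ∫ t in 1..x + 1, log (Gamma t) = ∫ t in 0..x, log (Gamma (t + 1)) := by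
          rw [integral_comp_add_right (fun t => log (Gamma t)), zero_add]
      _ = ∫ t in 0..x, (log (Gamma t) + log t) :=
          integral_congr_Ioo_of_le hx fun t ht => log_Gamma_add_one ht.1
      _ = (∫ t in 0..x, log (Gamma t)) + (x * log x - x) := by
          rw [integral_add (intervalIntegrable_log_Gamma le_rfl hx) intervalIntegrable_log',
            integral_log]
          simp
  rw [← integral_add_adjacent_intervals (b := 1) (intervalIntegrable_log_Gamma hx zero_le_one)
    (intervalIntegrable_log_Gamma zero_le_one (by linarith)), hshift,
    ← integral_log_Gamma_zero_one, ← integral_add_adjacent_intervals (b := x)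
    (intervalIntegrable_log_Gamma le_rfl hx) (intervalIntegrable_log_Gamma hx zero_le_one)]
  ring

end Real

/-- Kinkelin's G-function satisfies `G̃(x+1) = G̃(x) · x^x` for all `x > 0`,
and `G̃(0) = G̃(1) = 1`. -/
theorem kinkelinG_functional_equation :
    (∀ x : ℝ, 0 < x → kinkelinG (x + 1) = kinkelinG x * x ^ x) ∧
      kinkelinG 0 = 1 ∧ kinkelinG 1 = 1 := by
  refine ⟨fun x hx => ?_, by simp [kinkelinG], ?_⟩
  · rw [kinkelinG, kinkelinG, ← integral_add_adjacent_intervals (b := x)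
      (intervalIntegrable_log_Gamma le_rfl hx.le)
      (intervalIntegrable_log_Gamma hx.le (by linarith)),
      integral_log_Gamma_raabe hx.le, rpow_def_of_pos hx, ← exp_add]
    congr 1
    ring
  · rw [kinkelinG, integral_log_Gamma_zero_one, exp_eq_one_iff]
    ring
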